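/- arXiv:1006.4120 — 3 statements merged into one kernel-verified Lean document; each statement's English description precedes it below -/
import Mathlib

section
/- Under the Fock-vacuum assumptions, define for integers m,n ≥ 0 the subspace 𝒱_(m,n) = span_ℂ{|m,n,α⟩, |m,n,β⟩} ⊆ V, and set 𝒱_(m,n) = {0} when m < 0 or n < 0. Then for all m ≥ 0 and 0 ≤ n ≤ p: b⁺·𝒱_(m,n) ⊆ 𝒱_(m+1,n), b⁻·𝒱_(m,n) ⊆ 𝒱_(m-1,n), f⁺·𝒱_(m,n) ⊆ 𝒱_(m,n+1), and f⁻·𝒱_(m,n) ⊆ 𝒱_(m,n-1). In particular, assigning to 𝒱_(m,n) the degree (m mod 2, n mod 2) ∈ ℤ₂ × ℤ₂, the operators b⁺, b⁻ shift the degree by (1,0) and f⁺, f⁻ shift the degree by (0,1). -/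
noncomputable section

/-- The commutator `[x, y] = x*y - y*x`. -/
def pbComm {A : Type*} [Ring A] (x y : A) : A := x * y - y * x

/-- The anticommutator `{x, y} = x*y + y*x`. -/
def pbAcomm {A : Type*} [Ring A] (x y : A) : A := x * y + y * x

/-- The defining trilinear relations of the Relative Parabose Set algebra
`P_BF^(1,1)` on generators `bp = b⁺`, `bm = b⁻`, `fp = f⁺`, `fm = f⁻`. -/
def PBFRels {A : Type*} [Ring A] (bp bm fp fm : A) : Prop :=
  pbComm (pbAcomm bp bp) fm = 0 ∧
  pbComm (pbComm fp fm) bm = 0 ∧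
  pbComm (pbAcomm bp bp) fp = 0 ∧
  pbComm (pbAcomm bm bm) fp = 0 ∧
  pbComm (pbAcomm bm bm) fm = 0 ∧
  pbComm (pbAcomm bp bm) fm = 0 ∧
  pbComm (pbAcomm fm bm) bm = 0 ∧
  pbComm (pbAcomm fm bp) bp = 0 ∧
  pbComm (pbAcomm fm bp) bm = -(2 * fm) ∧
  pbAcomm (pbAcomm bm fp) fm = 2 * bm ∧
  pbComm (pbAcomm fp bp) bp = 0 ∧
  pbComm (pbAcomm fp bm) bm = 0 ∧
  pbComm (pbAcomm bm fm) bp = 2 * fm ∧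
  pbAcomm (pbAcomm fm bm) fp = 2 * bm ∧
  pbAcomm (pbAcomm bm fm) fm = 0 ∧
  pbAcomm (pbAcomm bm fp) fp = 0 ∧
  pbComm (pbAcomm bm bp) fp = 0 ∧
  pbComm (pbComm fm fp) bp = 0 ∧
  pbAcomm (pbAcomm bp fp) fp = 0 ∧
  pbAcomm (pbAcomm bp fm) fm = 0 ∧
  pbComm (pbAcomm fp bm) bp = 2 * fp ∧
  pbComm (pbAcomm bp fp) bm = -(2 * fp) ∧
  pbAcomm (pbAcomm bp fm) fp = 2 * bp ∧
  pbAcomm (pbAcomm fp bp) fm = 2 * bp ∧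
  pbComm bm (pbAcomm bp bm) = 2 * bm ∧
  pbComm bp (pbAcomm bp bp) = 0 ∧
  pbComm bp (pbAcomm bm bm) = -(4 * bm) ∧
  pbComm fm (pbComm fp fm) = 2 * fm ∧
  pbComm bm (pbAcomm bm bm) = 0 ∧
  pbComm bm (pbAcomm bp bp) = 4 * bp ∧
  pbComm bp (pbAcomm bm bp) = -(2 * bp) ∧
  pbComm fp (pbComm fm fp) = 2 * fp

/-- `R⁺ = (1/2)(b⁺f⁺ + f⁺b⁺)` as a linear operator. -/
def Rplus {V : Type*} [AddCommGroup V] [Module ℂ V] (bp fp : Module.End ℂ V) :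
    Module.End ℂ V := (2 : ℂ)⁻¹ • (bp * fp + fp * bp)

/-- The vector `|m, n, α⟩ = (f⁺)ⁿ (b⁺)ᵐ |0⟩`. -/
def vA {V : Type*} [AddCommGroup V] [Module ℂ V] (bp fp : Module.End ℂ V)
    (vac : V) (m n : ℕ) : V := (fp ^ n * bp ^ m) vac

/-- The vector `|m, n, β⟩ = (f⁺)^(n-1) (b⁺)^(m-1) R⁺ |0⟩`, set to `0` when
`m = 0` or `n = 0`. -/
def vB {V : Type*} [AddCommGroup V] [Module ℂ V] (bp fp : Module.End ℂ V)
    (vac : V) (m n : ℕ) : V :=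
  if m = 0 ∨ n = 0 then 0 else (fp ^ (n - 1) * bp ^ (m - 1) * Rplus bp fp) vac

/-- The subspace `𝒱_(m,n) = span {|m,n,α⟩, |m,n,β⟩}`, set to `{0}` when
`m < 0` or `n < 0`. -/
def Vsub {V : Type*} [AddCommGroup V] [Module ℂ V]
    (bp fp : Module.End ℂ V) (vac : V) (m n : ℤ) : Submodule ℂ V :=
  if 0 ≤ m ∧ 0 ≤ n then
    Submodule.span ℂ {vA bp fp vac m.toNat n.toNat, vB bp fp vac m.toNat n.toNat}
  else ⊥

namespace PBFaux

variable {V : Type*} [AddCommGroup V] [Module ℂ V]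

lemma halfc {x y : Module.End ℂ V} (h : x + x = y + y) : x = y := by
  have h2 : (2:ℂ) • x = (2:ℂ) • y := by rw [two_smul, two_smul]; exact h
  exact smul_right_injective _ two_ne_zero h2

lemma halfz {x : Module.End ℂ V} (h : x + x = 0) : x = 0 := by
  apply halfc (y := 0); simpa using h

lemma comm_apply {x y : Module.End ℂ V} (h : x * y = y * x) (m : ℕ) (w : V) :
    x ((y ^ m) w) = (y ^ m) (x w) := by
  have h2 : x * y ^ m = y ^ m * x := (Commute.pow_right h m)
  have := congrArg (fun g : Module.End ℂ V => g w) h2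
  simpa [Module.End.mul_apply] using this

lemma move1 (F x s : Module.End ℂ V) (hx : x * F = s - F * x) (hs : s * F = -(F * s)) (n : ℕ) :
    x * F ^ (n+1) = ((-1:ℂ)^(n+1)) • (F^(n+1) * x) - (((-1:ℂ)^(n+1)) * (n+1)) • (F^n * s) := by
  induction n with
  | zero =>
    simp only [pow_one, pow_zero, one_mul, Nat.cast_zero, zero_add, mul_one]
    rw [hx]
    module
  | succ n ih =>
    have hstep : x * F ^ (n+2) = (x * F^(n+1)) * F := by rw [mul_assoc, ← pow_succ]
    rw [hstep, ih, sub_mul, smul_mul_assoc, smul_mul_assoc, mul_assoc, mul_assoc, hx, hs]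
    have hp1 : F ^ (n+1) * (s - F * x) = F^(n+1) * s - F^(n+2) * x := by
      rw [mul_sub, ← mul_assoc, ← pow_succ]
    have hp2 : F ^ n * -(F * s) = -(F^(n+1) * s) := by
      rw [mul_neg, ← mul_assoc, ← pow_succ]
    rw [hp1, hp2]
    have c1 : ((-1:ℂ)^(n+2)) = -((-1:ℂ)^(n+1)) := by ring
    have c2 : ((-1:ℂ)^(n+2)) * ((n:ℂ)+1+1) = -(((-1:ℂ)^(n+1))) * ((n:ℂ)+1+1) := by ring
    push_cast
    rw [c1]
    module

lemma move2 (F f K : Module.End ℂ V) (hf : f * F = F * f - K) (hK : K * F = F * K + (2:ℂ) • F)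
    (n : ℕ) :
    f * F ^ (n+1) = F^(n+1) * f - (((n:ℂ)+1)) • (F^n * K) - (((n:ℂ)+1) * n) • (F^n) := by
  induction n with
  | zero => simp only [zero_add, pow_one, pow_zero, Nat.cast_zero, mul_one, one_mul]; rw [hf]; module
  | succ n ih =>
    have hstep : f * F ^ (n+2) = (f * F^(n+1)) * F := by rw [mul_assoc, ← pow_succ]
    rw [hstep, ih, sub_mul, sub_mul, smul_mul_assoc, smul_mul_assoc, mul_assoc, mul_assoc, hf, hK]
    have hp1 : F ^ (n+1) * (F * f - K) = F^(n+2) * f - F^(n+1) * K := by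
      rw [mul_sub, ← mul_assoc, ← pow_succ]
    have hp2 : F ^ n * (F * K + (2:ℂ) • F) = F^(n+1) * K + (2:ℂ) • F^(n+1) := by
      rw [mul_add, ← mul_assoc, ← pow_succ, mul_smul_comm, ← pow_succ]
    have hp3 : F ^ n * F = F ^ (n+1) := (pow_succ F n).symm
    rw [hp1, hp2, hp3]
    push_cast
    match_scalars <;> ring


lemma MV1 (F x s : Module.End ℂ V) (hx : x * F = s - F * x) (hs : s * F = -(F * s)) (n : ℕ)
    (w : V) :
    x ((F ^ (n+1)) w)
      = ((-1:ℂ)^(n+1)) • (F^(n+1)) (x w) - (((-1:ℂ)^(n+1)) * (n+1)) • (F^n) (s w) := by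
  have h := congrArg (fun g : Module.End ℂ V => g w) (move1 F x s hx hs n)
  simpa [Module.End.mul_apply, LinearMap.sub_apply, LinearMap.smul_apply] using h

lemma MV2 (F f K : Module.End ℂ V) (hf : f * F = F * f - K) (hK : K * F = F * K + (2:ℂ) • F)
    (n : ℕ) (w : V) :
    f ((F ^ (n+1)) w)
      = (F^(n+1)) (f w) - ((n:ℂ)+1) • (F^n) (K w) - (((n:ℂ)+1) * n) • (F^n) w := by
  have h := congrArg (fun g : Module.End ℂ V => g w) (move2 F f K hf hK n)
  simpa [Module.End.mul_apply, LinearMap.sub_apply, LinearMap.smul_apply] using h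

lemma pow_apply_succ (A : Module.End ℂ V) (k : ℕ) (w : V) :
    (A^(k+1)) w = A ((A^k) w) := by rw [pow_succ', Module.End.mul_apply]

lemma pow_apply_succ' (A : Module.End ℂ V) (k : ℕ) (w : V) :
    (A^(k+1)) w = (A^k) (A w) := by rw [pow_succ, Module.End.mul_apply]

lemma pow_apply_add (A : Module.End ℂ V) (k l : ℕ) (w : V) :
    (A^(k+l)) w = (A^k) ((A^l) w) := by rw [pow_add, Module.End.mul_apply]

/-- coefficient μ -/
def muc (p : ℂ) : ℕ → ℂ
  | 0 => p
  | (m+1) => p + 2*(m+1) - muc p m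

def c1c : ℕ → ℂ
  | 0 => 0
  | (m+1) => 2 - c1c m

def c2c : ℕ → ℂ
  | 0 => 4
  | (m+1) => 2 * c1c m + c2c m

def ec : ℕ → ℂ
  | 0 => 2
  | (m+1) => 2 - ec m

lemma VL1 (A T : Module.End ℂ V) (c : ℂ) (w : V)
    (hTA : T*A = A*T + (2:ℂ)•A) (hTw : T w = c • w) (m : ℕ) :
    T ((A^m) w) = (c + 2*m) • (A^m) w := by
  induction m with
  | zero => simpa using hTw
  | succ m ih =>
    rw [pow_apply_succ]
    have h : T (A ((A^m) w)) = A (T ((A^m) w)) + (2:ℂ) • (A ((A^m) w)) := by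
      have := congrArg (fun g : Module.End ℂ V => g ((A^m) w)) hTA
      simpa [Module.End.mul_apply, LinearMap.add_apply, LinearMap.smul_apply] using this
    rw [h, ih, map_smul, ← pow_apply_succ]
    push_cast
    module

lemma scalar_pow (x A : Module.End ℂ V) (c : ℂ) (w : V)
    (h : x*A = A*x) (h0 : x w = c•w) (m : ℕ) :
    x ((A^m) w) = c • (A^m) w := by
  rw [comm_apply h, h0, map_smul]

lemma VL2 (A a T : Module.End ℂ V) (p : ℂ) (vac : V)
    (hTA : T*A = A*T + (2:ℂ)•A) (hT0 : T vac = p•vac)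
    (haA : a*A = T - A*a) (hbase : a (A vac) = p • vac) (m : ℕ) :
    a ((A^(m+1)) vac) = muc p m • (A^m) vac := by
  induction m with
  | zero => simpa [muc] using hbase
  | succ m ih =>
    rw [pow_apply_succ]
    have h : a (A ((A^(m+1)) vac)) = T ((A^(m+1)) vac) - A (a ((A^(m+1)) vac)) := by
      have := congrArg (fun g : Module.End ℂ V => g ((A^(m+1)) vac)) haA
      simpa [Module.End.mul_apply, LinearMap.sub_apply] using this
    rw [h, ih, VL1 A T p vac hTA hT0 (m+1), map_smul, ← pow_apply_succ, muc]
    push_cast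
    module

lemma VL4 (A f : Module.End ℂ V) (vac : V)
    (hfA2 : f*(A*A) = (A*A)*f) (h0 : f vac = 0) (h1 : f (A vac) = 0) (m : ℕ) :
    f ((A^m) vac) = 0 := by
  induction m using Nat.twoStepInduction with
  | zero => simpa using h0
  | one => simpa [pow_one] using h1
  | more m ih _ =>
    have hp : (A^(m+2)) vac = (A*A) ((A^m) vac) := by
      have : A^(m+2) = (A*A) * A^m := by
        rw [pow_succ', pow_succ', mul_assoc]
      rw [this, Module.End.mul_apply]
    have := congrArg (fun g : Module.End ℂ V => g ((A^m) vac)) hfA2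
    simp only [Module.End.mul_apply] at this
    rw [hp, Module.End.mul_apply, this, ih, map_zero, map_zero]

lemma VL9 (A f S' : Module.End ℂ V) (vac : V)
    (hfA : f*A = S' - A*f) (hS'A : S'*A = A*S')
    (w : V) (hfw : f w = A vac) (hS'w : S' w = (2:ℂ) • ((A*A) vac)) (m : ℕ) :
    f ((A^m) w) = (A^(m+1)) vac := by
  induction m with
  | zero => simpa [pow_one] using hfw
  | succ m ih =>
    rw [pow_apply_succ]
    have h : f (A ((A^m) w)) = S' ((A^m) w) - A (f ((A^m) w)) := by
      have := congrArg (fun g : Module.End ℂ V => g ((A^m) w)) hfA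
      simpa [Module.End.mul_apply, LinearMap.sub_apply] using this
    rw [h, ih, comm_apply hS'A, hS'w, map_smul, ← pow_apply_succ]
    have h2 : (A^m) ((A*A) vac) = (A^(m+2)) vac := by
      have : (A^(m+2)) vac = (A^m) ((A^2) vac) := pow_apply_add A m 2 vac
      simpa [pow_two] using this.symm
    rw [h2]
    module

lemma VL6 (A F a T Rp : Module.End ℂ V) (p : ℂ) (vac : V)
    (hTA : T*A = A*T + (2:ℂ)•A) (hTw : T (Rp vac) = (p+2)•(Rp vac))
    (haA : a*A = T - A*a) (hbase : a (Rp vac) = F vac)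
    (hAF : A*F = (2:ℂ)•Rp - F*A) (hRpA : Rp*A = A*Rp) (m : ℕ) :
    a ((A^(m+1)) (Rp vac)) = F ((A^(m+1)) vac) + muc p m • (A^m) (Rp vac) := by
  have hAFv : ∀ u : V, A (F u) = (2:ℂ) • Rp u - F (A u) := by
    intro u
    have := congrArg (fun g : Module.End ℂ V => g u) hAF
    simpa [Module.End.mul_apply, LinearMap.sub_apply, LinearMap.smul_apply] using this
  have hav : ∀ u : V, a (A u) = T u - A (a u) := by
    intro u
    have := congrArg (fun g : Module.End ℂ V => g u) haA
    simpa [Module.End.mul_apply, LinearMap.sub_apply] using this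
  induction m with
  | zero =>
    rw [pow_apply_succ, pow_zero, Module.End.one_apply, hav, hbase, hTw, hAFv, pow_one, muc]
    module
  | succ m ih =>
    rw [pow_apply_succ, hav, ih, VL1 A T (p+2) (Rp vac) hTA hTw (m+1)]
    rw [map_add, map_smul, hAFv, comm_apply hRpA, ← pow_apply_succ, ← pow_apply_succ, muc]
    push_cast
    module

lemma VL7a (A F S : Module.End ℂ V) (vac : V)
    (hSA : S*A = A*S + (2:ℂ)•F) (hS0 : S vac = 0) :
    S (A vac) = (2:ℂ) • F vac := by
  have := congrArg (fun g : Module.End ℂ V => g vac) hSA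
  simpa [Module.End.mul_apply, LinearMap.add_apply, LinearMap.smul_apply, hS0] using this

lemma VL7 (A F S Rp : Module.End ℂ V) (vac : V)
    (hSA : S*A = A*S + (2:ℂ)•F) (hS0 : S vac = 0)
    (hAF : A*F = (2:ℂ)•Rp - F*A) (hRpA : Rp*A = A*Rp) (m : ℕ) :
    S ((A^(m+2)) vac) = c1c m • F ((A^(m+1)) vac) + c2c m • (A^m) (Rp vac) := by
  have hAFv : ∀ u : V, A (F u) = (2:ℂ) • Rp u - F (A u) := by
    intro u
    have := congrArg (fun g : Module.End ℂ V => g u) hAF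
    simpa [Module.End.mul_apply, LinearMap.sub_apply, LinearMap.smul_apply] using this
  have hSv : ∀ u : V, S (A u) = A (S u) + (2:ℂ) • F u := by
    intro u
    have := congrArg (fun g : Module.End ℂ V => g u) hSA
    simpa [Module.End.mul_apply, LinearMap.add_apply, LinearMap.smul_apply] using this
  induction m with
  | zero =>
    have e : (A^(0+2)) vac = A (A vac) := by rw [pow_apply_succ, pow_one]
    rw [e, hSv, VL7a A F S vac hSA hS0, map_smul, hAFv, c1c, c2c]
    simp only [pow_zero, pow_one, zero_add, Module.End.one_apply]
    module
  | succ m ih =>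
    rw [pow_apply_succ, hSv, ih, map_add, map_smul, map_smul, hAFv,
      comm_apply hRpA, ← pow_apply_succ, ← pow_apply_succ, c1c, c2c]
    module

lemma VL8b (A F S Rp : Module.End ℂ V) (vac : V)
    (hSA : S*A = A*S + (2:ℂ)•F) (hSRp0 : S (Rp vac) = 0)
    (hAF : A*F = (2:ℂ)•Rp - F*A) (hRpA : Rp*A = A*Rp) (hRpRp : Rp*Rp = 0) (m : ℕ) :
    S ((A^(m+1)) (Rp vac)) = ec m • F ((A^m) (Rp vac)) := by
  have hAFv : ∀ u : V, A (F u) = (2:ℂ) • Rp u - F (A u) := by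
    intro u
    have := congrArg (fun g : Module.End ℂ V => g u) hAF
    simpa [Module.End.mul_apply, LinearMap.sub_apply, LinearMap.smul_apply] using this
  have hSv : ∀ u : V, S (A u) = A (S u) + (2:ℂ) • F u := by
    intro u
    have := congrArg (fun g : Module.End ℂ V => g u) hSA
    simpa [Module.End.mul_apply, LinearMap.add_apply, LinearMap.smul_apply] using this
  have hRp0 : Rp (Rp vac) = 0 := by
    have := congrArg (fun g : Module.End ℂ V => g vac) hRpRp
    simpa [Module.End.mul_apply] using this
  induction m with
  | zero =>
    rw [pow_apply_succ, pow_zero, Module.End.one_apply, hSv, hSRp0, map_zero, zero_add, ec]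
  | succ m ih =>
    rw [pow_apply_succ, hSv, ih, map_smul, hAFv, comm_apply hRpA, hRp0, map_zero, smul_zero,
      zero_sub, ← pow_apply_succ, ec]
    module

lemma cancel2 {x y : Module.End ℂ V} (h : (2:ℂ)•x = (2:ℂ)•y) : x = y :=
  smul_right_injective _ two_ne_zero h

lemma cancel2' {x : Module.End ℂ V} (h : (2:ℂ)•x = 0) : x = 0 := by
  apply cancel2 (y := 0); simpa using h

lemma mem2 {x u w : V} (c d : ℂ) (h : x = c•u + d•w) :
    x ∈ Submodule.span ℂ {u, w} :=
  Submodule.mem_span_pair.mpr ⟨c, d, h.symm⟩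

lemma map_pair (op : Module.End ℂ V) (x y : V) (U : Submodule ℂ V)
    (hx : op x ∈ U) (hy : op y ∈ U) :
    ∀ v ∈ Submodule.span ℂ {x, y}, op v ∈ U := by
  intro v hv
  have hle : Submodule.span ℂ ({x, y} : Set V) ≤ U.comap op := by
    rw [Submodule.span_le]
    rintro z hz
    simp only [Set.mem_insert_iff, Set.mem_singleton_iff] at hz
    rcases hz with rfl | rfl <;> simpa
  exact hle hv

end PBFaux


theorem graded_module_structure {V : Type*} [AddCommGroup V] [Module ℂ V]
    (p : ℕ) (hp : 0 < p)
    (bp bm fp fm : Module.End ℂ V) (hrel : PBFRels bp bm fp fm)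
    (vac : V) (hb0 : bm vac = 0) (hf0 : fm vac = 0)
    (hbb : bm (bp vac) = (p : ℂ) • vac) (hff : fm (fp vac) = (p : ℂ) • vac)
    (hbf : bm (fp vac) = 0) (hfb : fm (bp vac) = 0)
    (m n : ℕ) (hn : n ≤ p) :
    (∀ v ∈ Vsub bp fp vac (m : ℤ) (n : ℤ), bp v ∈ Vsub bp fp vac ((m : ℤ) + 1) (n : ℤ)) ∧
    (∀ v ∈ Vsub bp fp vac (m : ℤ) (n : ℤ), bm v ∈ Vsub bp fp vac ((m : ℤ) - 1) (n : ℤ)) ∧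
    (∀ v ∈ Vsub bp fp vac (m : ℤ) (n : ℤ), fp v ∈ Vsub bp fp vac (m : ℤ) ((n : ℤ) + 1)) ∧
    (∀ v ∈ Vsub bp fp vac (m : ℤ) (n : ℤ), fm v ∈ Vsub bp fp vac (m : ℤ) ((n : ℤ) - 1)) := by
  classical
  obtain ⟨r1,r2,r3,r4,r5,r6,r7,r8,r9,r10,r11,r12,r13,r14,r15,r16,r17,r18,r19,r20,r21,r22,
    r23,r24,r25,r26,r27,r28,r29,r30,r31,r32⟩ := hrel
  simp only [pbComm, pbAcomm] at r1 r8 r11 r16 r17 r18 r19 r21 r22 r23 r24 r31 r32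
  obtain ⟨Rp, hRpD⟩ : ∃ R, R = Rplus bp fp := ⟨_, rfl⟩
  obtain ⟨S, hSD⟩ : ∃ S, S = bm * fp + fp * bm := ⟨_, rfl⟩
  obtain ⟨T, hTD⟩ : ∃ T, T = bm * bp + bp * bm := ⟨_, rfl⟩
  obtain ⟨K, hKD⟩ : ∃ K, K = fp * fm - fm * fp := ⟨_, rfl⟩
  obtain ⟨S', hS'D⟩ : ∃ S', S' = fm * bp + bp * fm := ⟨_, rfl⟩
  -- basic operator identities
  have hRpdef : bp * fp + fp * bp = (2:ℂ) • Rp := by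
    rw [hRpD, Rplus, smul_smul]; norm_num
  have hAF : bp * fp = (2:ℂ)•Rp - fp*bp := by rw [← hRpdef]; abel
  have hRpF : Rp * fp = -(fp * Rp) := by
    rw [hRpdef] at r19
    rw [smul_mul_assoc, mul_smul_comm, ← smul_add] at r19
    have h2 : Rp*fp + fp*Rp = 0 := PBFaux.cancel2' r19
    exact eq_neg_of_add_eq_zero_left h2
  have h2RpF : ((2:ℂ)•Rp) * fp = -(fp * ((2:ℂ)•Rp)) := by
    rw [smul_mul_assoc, mul_smul_comm, hRpF, smul_neg]
  have hRpA : Rp * bp = bp * Rp := by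
    rw [add_comm (fp*bp) (bp*fp), hRpdef] at r11
    rw [smul_mul_assoc, mul_smul_comm, ← smul_sub] at r11
    exact sub_eq_zero.mp (PBFaux.cancel2' r11)
  have hRpRp : Rp * Rp = 0 := by
    have k1 : Rp*(bp*fp) = -((bp*fp)*Rp) := by
      rw [← mul_assoc, hRpA, mul_assoc, hRpF, mul_neg, ← mul_assoc]
    have k2 : Rp*(fp*bp) = -((fp*bp)*Rp) := by
      rw [← mul_assoc, hRpF, neg_mul, mul_assoc, hRpA, ← mul_assoc]
    have k3 : Rp * ((2:ℂ)•Rp) = -(((2:ℂ)•Rp)*Rp) := by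
      rw [← hRpdef, mul_add, add_mul, k1, k2]; abel
    rw [mul_smul_comm, smul_mul_assoc, ← smul_neg] at k3
    have k4 : Rp * Rp = -(Rp*Rp) := PBFaux.cancel2 k3
    have k5 : Rp*Rp + Rp*Rp = 0 := by nth_rewrite 2 [k4]; simp
    exact PBFaux.halfz k5
  -- S identities
  have hSF : S * fp = -(fp * S) := by
    rw [← hSD] at r16
    exact eq_neg_of_add_eq_zero_left r16
  have haF : bm * fp = S - fp * bm := by rw [hSD]; abel
  have hSA : S * bp = bp * S + (2:ℂ)•fp := by
    rw [add_comm (fp*bm) (bm*fp), ← hSD] at r21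
    have := sub_eq_iff_eq_add'.mp r21
    rw [this, two_mul, two_smul]
  -- T identities
  have hTA : T * bp = bp * T + (2:ℂ)•bp := by
    rw [← hTD] at r31
    -- r31 : bp * T - T * bp = -(2*bp)
    have : T * bp - bp * T = 2 * bp := by
      have := congrArg Neg.neg r31
      simpa [neg_sub] using this
    have h2 := sub_eq_iff_eq_add'.mp this
    rw [h2, two_mul, two_smul]
  have hTF : T * fp = fp * T := by
    rw [← hTD] at r17
    exact sub_eq_zero.mp r17
  have haA : bm * bp = T - bp * bm := by rw [hTD]; abel
  -- a Rp
  have haRp : bm * Rp = Rp * bm + fp := by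
    rw [hRpdef] at r22
    rw [smul_mul_assoc, mul_smul_comm, ← smul_sub] at r22
    have h2 : Rp * bm - bm * Rp = -fp := by
      have : (2:ℂ) • (Rp*bm - bm*Rp) = (2:ℂ) • (-fp) := by
        rw [r22, two_mul, two_smul]; abel
      exact PBFaux.cancel2 this
    have h3 : bm*Rp - Rp*bm = fp := by
      rw [← neg_sub (Rp*bm) (bm*Rp), h2, neg_neg]
    exact sub_eq_iff_eq_add'.mp h3
  -- K identities
  have hfF : fm * fp = fp * fm - K := by rw [hKD]; abel
  have hKF : K * fp = fp * K + (2:ℂ)•fp := by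
    -- r32 : fp * (fm*fp - fp*fm) - (fm*fp - fp*fm) * fp = 2 * fp
    have h : K * fp - fp * K = 2 * fp := by
      rw [hKD]
      have : (fp*fm - fm*fp) * fp - fp * (fp*fm - fm*fp)
          = fp * (fm*fp - fp*fm) - (fm*fp - fp*fm) * fp := by noncomm_ring
      rw [this, r32]
    have h2 := sub_eq_iff_eq_add'.mp h
    rw [h2, two_mul, two_smul]
  have hKA : K * bp = bp * K := by
    -- r18 : (fm*fp - fp*fm) * bp - bp * (fm*fp - fp*fm) = 0
    have h : bp * K - K * bp = 0 := by
      rw [hKD]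
      have : bp * (fp*fm - fm*fp) - (fp*fm - fm*fp) * bp
          = (fm*fp - fp*fm) * bp - bp * (fm*fp - fp*fm) := by noncomm_ring
      rw [this, r18]
    exact (sub_eq_zero.mp h).symm
  -- S' identities
  have hfA : fm * bp = S' - bp * fm := by rw [hS'D]; abel
  have hS'A : S' * bp = bp * S' := by
    rw [← hS'D] at r8
    exact sub_eq_zero.mp r8
  have hS'F : S' * fp = (2:ℂ)•bp - fp * S' := by
    rw [add_comm (bp*fm) (fm*bp), ← hS'D] at r23
    have h2 : fp * S' + S' * fp = 2 * bp := by rw [← r23]; abel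
    have h3 : S' * fp = 2 * bp - fp * S' := by
      rw [← h2]; abel
    rw [h3, two_mul, two_smul]
  -- fm Rp
  have hfRp : fm * Rp = bp - Rp * fm := by
    rw [add_comm (fp*bp) (bp*fp), hRpdef] at r24
    rw [smul_mul_assoc, mul_smul_comm, ← smul_add] at r24
    have h2 : Rp * fm + fm * Rp = bp := by
      have : (2:ℂ) • (Rp*fm + fm*Rp) = (2:ℂ) • bp := by
        rw [r24, two_mul, two_smul]
      exact PBFaux.cancel2 this
    rw [← h2]; abel
  -- fm A^2
  have hfA2 : fm * (bp * bp) = (bp * bp) * fm := by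
    -- r1 : (bp*bp + bp*bp) * fm - fm * (bp*bp + bp*bp) = 0
    have h : (bp*bp) * fm + (bp*bp) * fm = fm * (bp*bp) + fm * (bp*bp) := by
      have h2 := sub_eq_zero.mp r1
      rw [add_mul, mul_add] at h2
      exact h2
    exact (PBFaux.halfc h).symm
  -- vacuum facts
  have hSvac : S vac = 0 := by
    rw [hSD]
    simp [LinearMap.add_apply, Module.End.mul_apply, hbf, hb0]
  have hTvac : T vac = (p:ℂ) • vac := by
    rw [hTD]
    simp [LinearMap.add_apply, Module.End.mul_apply, hbb, hb0]
  have hKvac : K vac = (-(p:ℂ)) • vac := by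
    rw [hKD]
    simp [LinearMap.sub_apply, Module.End.mul_apply, hff, hf0]
  have hS'vac : S' vac = 0 := by
    rw [hS'D]
    simp [LinearMap.add_apply, Module.End.mul_apply, hfb, hf0]
  have app : ∀ (x y : Module.End ℂ V) (u : V), (x * y) u = x (y u) := fun x y u => rfl
  have hRpvac : Rp vac = (2:ℂ)⁻¹ • (bp (fp vac) + fp (bp vac)) := by
    rw [hRpD, Rplus]
    simp [LinearMap.smul_apply, LinearMap.add_apply, Module.End.mul_apply]
  -- applied identities
  have hSAv : ∀ u : V, S (bp u) = bp (S u) + (2:ℂ) • fp u := by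
    intro u
    have := congrArg (fun g : Module.End ℂ V => g u) hSA
    simpa [Module.End.mul_apply, LinearMap.add_apply, LinearMap.smul_apply] using this
  have hSFv : ∀ u : V, S (fp u) = -(fp (S u)) := by
    intro u
    have := congrArg (fun g : Module.End ℂ V => g u) hSF
    simpa [Module.End.mul_apply, LinearMap.neg_apply] using this
  have hTAv : ∀ u : V, T (bp u) = bp (T u) + (2:ℂ) • bp u := by
    intro u
    have := congrArg (fun g : Module.End ℂ V => g u) hTA
    simpa [Module.End.mul_apply, LinearMap.add_apply, LinearMap.smul_apply] using this
  have hTFv : ∀ u : V, T (fp u) = fp (T u) := by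
    intro u
    have := congrArg (fun g : Module.End ℂ V => g u) hTF
    simpa [Module.End.mul_apply] using this
  have hKFv : ∀ u : V, K (fp u) = fp (K u) + (2:ℂ) • fp u := by
    intro u
    have := congrArg (fun g : Module.End ℂ V => g u) hKF
    simpa [Module.End.mul_apply, LinearMap.add_apply, LinearMap.smul_apply] using this
  have hKAv : ∀ u : V, K (bp u) = bp (K u) := by
    intro u
    have := congrArg (fun g : Module.End ℂ V => g u) hKA
    simpa [Module.End.mul_apply] using this
  have hS'Av : ∀ u : V, S' (bp u) = bp (S' u) := by
    intro u
    have := congrArg (fun g : Module.End ℂ V => g u) hS'A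
    simpa [Module.End.mul_apply] using this
  have hS'Fv : ∀ u : V, S' (fp u) = (2:ℂ) • bp u - fp (S' u) := by
    intro u
    have := congrArg (fun g : Module.End ℂ V => g u) hS'F
    simpa [Module.End.mul_apply, LinearMap.sub_apply, LinearMap.smul_apply] using this
  -- vacuum consequences
  have hSfvac : S (fp vac) = 0 := by rw [hSFv, hSvac, map_zero, neg_zero]
  have hSbvac : S (bp vac) = (2:ℂ) • fp vac := by rw [hSAv, hSvac, map_zero, zero_add]
  have hSRpvac : S (Rp vac) = 0 := by
    rw [hRpvac, map_smul, map_add, hSAv, hSfvac, map_zero, zero_add, hSFv, hSbvac, map_smul]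
    simp
  have hTRpvac : T (Rp vac) = ((p:ℂ) + 2) • Rp vac := by
    have x1 : T (bp (fp vac)) = ((p:ℂ)+2) • (bp (fp vac)) := by
      rw [hTAv, hTFv, hTvac]; simp only [map_add, map_smul]; module
    have x2 : T (fp (bp vac)) = ((p:ℂ)+2) • (fp (bp vac)) := by
      rw [hTFv, hTAv, hTvac]; simp only [map_add, map_smul]; module
    rw [hRpvac, map_smul, map_add, x1, x2]
    module
  have hKRpvac : K (Rp vac) = ((2:ℂ) - (p:ℂ)) • Rp vac := by
    have x1 : K (bp (fp vac)) = ((2:ℂ)-(p:ℂ)) • (bp (fp vac)) := by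
      rw [hKAv, hKFv, hKvac]; simp only [map_add, map_smul]; module
    have x2 : K (fp (bp vac)) = ((2:ℂ)-(p:ℂ)) • (fp (bp vac)) := by
      rw [hKFv, hKAv, hKvac]; simp only [map_add, map_smul]; module
    rw [hRpvac, map_smul, map_add, x1, x2]
    module
  have hS'Rpvac : S' (Rp vac) = (2:ℂ) • ((bp * bp) vac) := by
    have x1 : S' (bp (fp vac)) = (2:ℂ) • (bp (bp vac)) := by
      rw [hS'Av, hS'Fv, hS'vac, map_zero, sub_zero, map_smul]
    have x2 : S' (fp (bp vac)) = (2:ℂ) • (bp (bp vac)) := by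
      rw [hS'Fv, hS'Av, hS'vac, map_zero, map_zero, sub_zero]
    rw [hRpvac, map_smul, map_add, x1, x2, app]
    module
  have haRpvac : bm (Rp vac) = fp vac := by
    have := congrArg (fun g : Module.End ℂ V => g vac) haRp
    simp only [Module.End.mul_apply, LinearMap.add_apply] at this
    rw [this, hb0, map_zero, zero_add]
  have hfRpvac : fm (Rp vac) = bp vac := by
    have := congrArg (fun g : Module.End ℂ V => g vac) hfRp
    simp only [Module.End.mul_apply, LinearMap.sub_apply] at this
    rw [this, hf0, map_zero, sub_zero]
  have hRpRpvac : Rp (Rp vac) = 0 := by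
    have := congrArg (fun g : Module.End ℂ V => g vac) hRpRp
    simpa [Module.End.mul_apply] using this
  -- vA / vB unfolding
  have vAdef : ∀ M N : ℕ, vA bp fp vac M N = (fp^N) ((bp^M) vac) := by
    intro M N; rw [vA, Module.End.mul_apply]
  have vBdef : ∀ M N : ℕ, vB bp fp vac (M+1) (N+1) = (fp^N) ((bp^M) (Rp vac)) := by
    intro M N
    rw [hRpD, vB, if_neg (by omega)]
    simp only [Nat.add_sub_cancel, Module.End.mul_apply]
  have vB0n : ∀ N, vB bp fp vac 0 N = 0 := by
    intro N; rw [vB, if_pos (Or.inl rfl)]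
  have vBm0 : ∀ M, vB bp fp vac M 0 = 0 := by
    intro M; rw [vB, if_pos (Or.inr rfl)]
  have hVs : ∀ M N : ℕ, Vsub bp fp vac (M:ℤ) (N:ℤ)
      = Submodule.span ℂ {vA bp fp vac M N, vB bp fp vac M N} := by
    intro M N
    simp [Vsub]

  -- the eight membership facts, packaged as span statements on ℕ indices
  have P1 : ∀ M N : ℕ, ∀ v ∈ Submodule.span ℂ {vA bp fp vac M N, vB bp fp vac M N},
      bp v ∈ Submodule.span ℂ {vA bp fp vac (M+1) N, vB bp fp vac (M+1) N} := by
    intro M N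
    apply PBFaux.map_pair
    · cases N with
      | zero =>
        apply PBFaux.mem2 1 0
        rw [vAdef, vAdef]
        simp only [pow_zero, Module.End.one_apply]
        rw [← PBFaux.pow_apply_succ]
        module
      | succ n' =>
        apply PBFaux.mem2 ((-1:ℂ)^(n'+1)) (-(((-1:ℂ)^(n'+1)) * ((n':ℂ)+1) * 2))
        rw [vAdef, vAdef, vBdef]
        rw [PBFaux.MV1 fp bp ((2:ℂ)•Rp) hAF h2RpF n' ((bp^M) vac)]
        rw [← PBFaux.pow_apply_succ, LinearMap.smul_apply, PBFaux.comm_apply hRpA, map_smul]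
        push_cast
        module
    · cases M with
      | zero =>
        rw [vB0n, map_zero]; exact Submodule.zero_mem _
      | succ m' =>
        cases N with
        | zero => rw [vBm0 (m'+1), map_zero]; exact Submodule.zero_mem _
        | succ n'' =>
          cases n'' with
          | zero =>
            apply PBFaux.mem2 0 1
            rw [vBdef, vBdef]
            simp only [pow_zero, Module.End.one_apply]
            rw [← PBFaux.pow_apply_succ]
            module
          | succ j =>
            apply PBFaux.mem2 0 ((-1:ℂ)^(j+1))
            rw [vBdef, vBdef]
            rw [PBFaux.MV1 fp bp ((2:ℂ)•Rp) hAF h2RpF j ((bp^m') (Rp vac))]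
            rw [← PBFaux.pow_apply_succ, LinearMap.smul_apply, PBFaux.comm_apply hRpA,
              hRpRpvac, map_zero, smul_zero, map_zero, smul_zero, sub_zero]
            module
  have P3 : ∀ M N : ℕ, ∀ v ∈ Submodule.span ℂ {vA bp fp vac M N, vB bp fp vac M N},
      fp v ∈ Submodule.span ℂ {vA bp fp vac M (N+1), vB bp fp vac M (N+1)} := by
    intro M N
    apply PBFaux.map_pair
    · apply PBFaux.mem2 1 0
      rw [vAdef, vAdef, ← PBFaux.pow_apply_succ]
      module
    · cases M with
      | zero => rw [vB0n N, map_zero]; exact Submodule.zero_mem _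
      | succ m' =>
        cases N with
        | zero => rw [vBm0 (m'+1), map_zero]; exact Submodule.zero_mem _
        | succ n'' =>
          apply PBFaux.mem2 0 1
          rw [vBdef, vBdef, ← PBFaux.pow_apply_succ]
          module
  have P2a : ∀ N : ℕ, ∀ v ∈ Submodule.span ℂ {vA bp fp vac 0 N, vB bp fp vac 0 N},
      bm v = 0 := by
    intro N
    have h1 : bm (vA bp fp vac 0 N) = 0 := by
      cases N with
      | zero => rw [vAdef]; simpa using hb0
      | succ n' =>
        rw [vAdef, PBFaux.MV1 fp bm S haF hSF n' ((bp^0) vac)]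
        simp [hb0, hSvac]
    have h2 : bm (vB bp fp vac 0 N) = 0 := by rw [vB0n, map_zero]
    intro v hv
    have := PBFaux.map_pair bm _ _ ⊥ (by rw [Submodule.mem_bot]; exact h1)
      (by rw [Submodule.mem_bot]; exact h2) v hv
    exact (Submodule.mem_bot ℂ).mp this
  have P4a : ∀ M : ℕ, ∀ v ∈ Submodule.span ℂ {vA bp fp vac M 0, vB bp fp vac M 0},
      fm v = 0 := by
    intro M
    have h1 : fm (vA bp fp vac M 0) = 0 := by
      rw [vAdef]
      simp only [pow_zero, Module.End.one_apply]
      exact PBFaux.VL4 bp fm vac hfA2 hf0 hfb M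
    have h2 : fm (vB bp fp vac M 0) = 0 := by rw [vBm0, map_zero]
    intro v hv
    have := PBFaux.map_pair fm _ _ ⊥ (by rw [Submodule.mem_bot]; exact h1)
      (by rw [Submodule.mem_bot]; exact h2) v hv
    exact (Submodule.mem_bot ℂ).mp this
  have P2 : ∀ M N : ℕ, ∀ v ∈ Submodule.span ℂ {vA bp fp vac (M+1) N, vB bp fp vac (M+1) N},
      bm v ∈ Submodule.span ℂ {vA bp fp vac M N, vB bp fp vac M N} := by
    intro M N
    apply PBFaux.map_pair
    · -- bm on vA (M+1) N
      cases N with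
      | zero =>
        apply PBFaux.mem2 (PBFaux.muc (p:ℂ) M) 0
        rw [vAdef, vAdef]
        simp only [pow_zero, Module.End.one_apply]
        rw [PBFaux.VL2 bp bm T (p:ℂ) vac hTA hTvac haA hbb M]
        module
      | succ n'' =>
        cases M with
        | zero =>
          apply PBFaux.mem2 ((-1:ℂ)^(n''+1) * (PBFaux.muc (p:ℂ) 0)
            - ((-1:ℂ)^(n''+1) * ((n'':ℂ)+1)) * 2) 0
          rw [vAdef, vAdef, PBFaux.MV1 fp bm S haF hSF n'' ((bp^(0+1)) vac)]
          rw [PBFaux.VL2 bp bm T (p:ℂ) vac hTA hTvac haA hbb 0]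
          simp only [zero_add, pow_one, pow_zero, Module.End.one_apply]
          rw [hSbvac, map_smul, map_smul, ← PBFaux.pow_apply_succ']
          module
        | succ k =>
          apply PBFaux.mem2 ((-1:ℂ)^(n''+1) * PBFaux.muc (p:ℂ) (k+1)
            - ((-1:ℂ)^(n''+1) * ((n'':ℂ)+1)) * PBFaux.c1c k)
            (-(((-1:ℂ)^(n''+1) * ((n'':ℂ)+1)) * PBFaux.c2c k))
          rw [vAdef, vAdef, vBdef, PBFaux.MV1 fp bm S haF hSF n'' ((bp^(k+1+1)) vac)]
          rw [PBFaux.VL2 bp bm T (p:ℂ) vac hTA hTvac haA hbb (k+1)]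
          rw [show k+1+1 = k+2 from rfl]
          rw [PBFaux.VL7 bp fp S Rp vac hSA hSvac hAF hRpA k]
          simp only [map_add, map_smul]
          rw [← PBFaux.pow_apply_succ']
          module
    · -- bm on vB (M+1) N
      cases N with
      | zero => rw [vBm0 (M+1), map_zero]; exact Submodule.zero_mem _
      | succ n'' =>
        cases n'' with
        | zero =>
          cases M with
          | zero =>
            apply PBFaux.mem2 1 0
            rw [vBdef, vAdef]
            simp only [pow_zero, zero_add, pow_one, Module.End.one_apply]
            rw [haRpvac]
            module
          | succ k =>
            apply PBFaux.mem2 1 (PBFaux.muc (p:ℂ) k)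
            rw [vBdef, vBdef, vAdef]
            simp only [pow_zero, zero_add, pow_one, Module.End.one_apply]
            rw [PBFaux.VL6 bp fp bm T Rp (p:ℂ) vac hTA hTRpvac haA haRpvac hAF hRpA k]
            module
        | succ j =>
          cases M with
          | zero =>
            apply PBFaux.mem2 ((-1:ℂ)^(j+1)) 0
            rw [vBdef, vAdef, PBFaux.MV1 fp bm S haF hSF j ((bp^0) (Rp vac))]
            simp only [pow_zero, Module.End.one_apply]
            rw [haRpvac, hSRpvac, map_zero, smul_zero, sub_zero, ← PBFaux.pow_apply_succ']
            module
          | succ k =>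
            apply PBFaux.mem2 ((-1:ℂ)^(j+1))
              ((-1:ℂ)^(j+1) * PBFaux.muc (p:ℂ) k
                - ((-1:ℂ)^(j+1) * ((j:ℂ)+1)) * PBFaux.ec k)
            rw [vBdef, vBdef, vAdef, PBFaux.MV1 fp bm S haF hSF j ((bp^(k+1)) (Rp vac))]
            rw [PBFaux.VL6 bp fp bm T Rp (p:ℂ) vac hTA hTRpvac haA haRpvac hAF hRpA k]
            rw [PBFaux.VL8b bp fp S Rp vac hSA hSRpvac hAF hRpA hRpRp k]
            simp only [map_add, map_smul]
            rw [← PBFaux.pow_apply_succ', ← PBFaux.pow_apply_succ']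
            module
  have P4 : ∀ M N : ℕ, ∀ v ∈ Submodule.span ℂ {vA bp fp vac M (N+1), vB bp fp vac M (N+1)},
      fm v ∈ Submodule.span ℂ {vA bp fp vac M N, vB bp fp vac M N} := by
    intro M N
    apply PBFaux.map_pair
    · apply PBFaux.mem2 (((N:ℂ)+1)*(p:ℂ) - ((N:ℂ)+1)*(N:ℂ)) 0
      rw [vAdef, vAdef, PBFaux.MV2 fp fm K hfF hKF N ((bp^M) vac)]
      rw [PBFaux.VL4 bp fm vac hfA2 hf0 hfb M, map_zero,
        PBFaux.scalar_pow K bp (-(p:ℂ)) vac hKA hKvac M, map_smul]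
      module
    · cases M with
      | zero => rw [vB0n (N+1), map_zero]; exact Submodule.zero_mem _
      | succ m' =>
        cases N with
        | zero =>
          apply PBFaux.mem2 1 0
          rw [vBdef, vAdef]
          simp only [pow_zero, Module.End.one_apply]
          rw [PBFaux.VL9 bp fm S' vac hfA hS'A (Rp vac) hfRpvac hS'Rpvac m']
          module
        | succ j =>
          apply PBFaux.mem2 1 (-(((j:ℂ)+1)*((2:ℂ)-(p:ℂ))) - ((j:ℂ)+1)*(j:ℂ))
          rw [vBdef, vBdef, vAdef, PBFaux.MV2 fp fm K hfF hKF j ((bp^m') (Rp vac))]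
          rw [PBFaux.VL9 bp fm S' vac hfA hS'A (Rp vac) hfRpvac hS'Rpvac m',
            PBFaux.scalar_pow K bp ((2:ℂ)-(p:ℂ)) (Rp vac) hKA hKRpvac m', map_smul]
          module
  refine ⟨?_, ?_, ?_, ?_⟩
  · intro v hv
    have hc : (m:ℤ) + 1 = ((m+1:ℕ):ℤ) := by push_cast; ring
    rw [hc, hVs (m+1) n]
    rw [hVs m n] at hv
    exact P1 m n v hv
  · intro v hv
    cases m with
    | zero =>
      have hbot : Vsub bp fp vac (((0:ℕ):ℤ) - 1) (n:ℤ) = ⊥ := by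
        simp only [Vsub]
        rw [if_neg (by omega)]
      rw [hbot, Submodule.mem_bot]
      rw [hVs 0 n] at hv
      exact P2a n v hv
    | succ k =>
      have hc : ((k+1:ℕ):ℤ) - 1 = ((k:ℕ):ℤ) := by push_cast; ring
      rw [hc, hVs k n]
      rw [hVs (k+1) n] at hv
      exact P2 k n v hv
  · intro v hv
    have hc : (n:ℤ) + 1 = ((n+1:ℕ):ℤ) := by push_cast; ring
    rw [hc, hVs m (n+1)]
    rw [hVs m n] at hv
    exact P3 m n v hv
  · intro v hv
    cases n with
    | zero =>
      have hbot : Vsub bp fp vac (m:ℤ) (((0:ℕ):ℤ) - 1) = ⊥ := by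
        simp only [Vsub]
        rw [if_neg (by omega)]
      rw [hbot, Submodule.mem_bot]
      rw [hVs m 0] at hv
      exact P4a m v hv
    | succ k =>
      have hc : ((k+1:ℕ):ℤ) - 1 = ((k:ℕ):ℤ) := by push_cast; ring
      rw [hc, hVs m k]
      rw [hVs m (k+1)] at hv
      exact P4 m k v hv
end
end

section
/- Let P_BF^(1,1) be the quotient of the free unital associative ℂ-algebra on the four generators b⁺, b⁻, f⁺, f⁻ by the two-sided ideal generated by the defining trilinear relations. Then there exists a (ℤ₂ × ℤ₂)-grading of P_BF^(1,1) as a ℂ-algebra, i.e. a family of ℂ-submodules (A_g)_{g ∈ ℤ₂×ℤ₂} with A_g · A_h ⊆ A_{g+h}, 1 ∈ A_{(0,0)}, and P_BF^(1,1) the internal direct sum of the A_g, such that the images of b⁺ and b⁻ lie in A_{(1,0)} and the images of f⁺ and f⁻ lie in A_{(0,1)}. -/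
noncomputable section

/-- The free unital associative `ℂ`-algebra on the four generators. -/
abbrev PBFFree : Type := FreeAlgebra ℂ (Fin 4)

/-- The generator `b⁺`. -/
def genBp : PBFFree := FreeAlgebra.ι ℂ 0
/-- The generator `b⁻`. -/
def genBm : PBFFree := FreeAlgebra.ι ℂ 1
/-- The generator `f⁺`. -/
def genFp : PBFFree := FreeAlgebra.ι ℂ 2
/-- The generator `f⁻`. -/
def genFm : PBFFree := FreeAlgebra.ι ℂ 3

/-- The defining trilinear relations of `P_BF^(1,1)` as a relation on the free
algebra (quotienting by it realizes the quotient by the two-sided ideal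
generated by the relations). -/
inductive PBFQRel : PBFFree → PBFFree → Prop
  | r01 : PBFQRel (pbComm (pbAcomm genBp genBp) genFm) (0)
  | r02 : PBFQRel (pbComm (pbComm genFp genFm) genBm) (0)
  | r03 : PBFQRel (pbComm (pbAcomm genBp genBp) genFp) (0)
  | r04 : PBFQRel (pbComm (pbAcomm genBm genBm) genFp) (0)
  | r05 : PBFQRel (pbComm (pbAcomm genBm genBm) genFm) (0)
  | r06 : PBFQRel (pbComm (pbAcomm genBp genBm) genFm) (0)
  | r07 : PBFQRel (pbComm (pbAcomm genFm genBm) genBm) (0)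
  | r08 : PBFQRel (pbComm (pbAcomm genFm genBp) genBp) (0)
  | r09 : PBFQRel (pbComm (pbAcomm genFm genBp) genBm) (-(2 * genFm))
  | r10 : PBFQRel (pbAcomm (pbAcomm genBm genFp) genFm) (2 * genBm)
  | r11 : PBFQRel (pbComm (pbAcomm genFp genBp) genBp) (0)
  | r12 : PBFQRel (pbComm (pbAcomm genFp genBm) genBm) (0)
  | r13 : PBFQRel (pbComm (pbAcomm genBm genFm) genBp) (2 * genFm)
  | r14 : PBFQRel (pbAcomm (pbAcomm genFm genBm) genFp) (2 * genBm)
  | r15 : PBFQRel (pbAcomm (pbAcomm genBm genFm) genFm) (0)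
  | r16 : PBFQRel (pbAcomm (pbAcomm genBm genFp) genFp) (0)
  | r17 : PBFQRel (pbComm (pbAcomm genBm genBp) genFp) (0)
  | r18 : PBFQRel (pbComm (pbComm genFm genFp) genBp) (0)
  | r19 : PBFQRel (pbAcomm (pbAcomm genBp genFp) genFp) (0)
  | r20 : PBFQRel (pbAcomm (pbAcomm genBp genFm) genFm) (0)
  | r21 : PBFQRel (pbComm (pbAcomm genFp genBm) genBp) (2 * genFp)
  | r22 : PBFQRel (pbComm (pbAcomm genBp genFp) genBm) (-(2 * genFp))
  | r23 : PBFQRel (pbAcomm (pbAcomm genBp genFm) genFp) (2 * genBp)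
  | r24 : PBFQRel (pbAcomm (pbAcomm genFp genBp) genFm) (2 * genBp)
  | r25 : PBFQRel (pbComm genBm (pbAcomm genBp genBm)) (2 * genBm)
  | r26 : PBFQRel (pbComm genBp (pbAcomm genBp genBp)) (0)
  | r27 : PBFQRel (pbComm genBp (pbAcomm genBm genBm)) (-(4 * genBm))
  | r28 : PBFQRel (pbComm genFm (pbComm genFp genFm)) (2 * genFm)
  | r29 : PBFQRel (pbComm genBm (pbAcomm genBm genBm)) (0)
  | r30 : PBFQRel (pbComm genBm (pbAcomm genBp genBp)) (4 * genBp)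
  | r31 : PBFQRel (pbComm genBp (pbAcomm genBm genBp)) (-(2 * genBp))
  | r32 : PBFQRel (pbComm genFp (pbComm genFm genFp)) (2 * genFp)

/-- The Relative Parabose Set algebra `P_BF^(1,1)`: the quotient of the free
unital associative `ℂ`-algebra on `b⁺, b⁻, f⁺, f⁻` by the two-sided ideal
generated by the defining trilinear relations. -/
abbrev PBF : Type := RingQuot PBFQRel

/-- The quotient map. -/
def pbfMk : PBFFree →ₐ[ℂ] PBF := RingQuot.mkAlgHom ℂ PBFQRel


/-! ### Auxiliary grading machinery -/

abbrev PBFGr : Type := ZMod 2 × ZMod 2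
def pbfDeg : Fin 4 → PBFGr := ![(1,0),(1,0),(0,1),(0,1)]

local notation "sg" => (AddMonoidAlgebra.single : PBFGr → PBF → AddMonoidAlgebra PBF PBFGr)

lemma pbf_sm (g h : PBFGr) (a b : PBF) : sg g a * sg h b = sg (g+h) (a*b) :=
  AddMonoidAlgebra.single_mul_single _ _ _ _

lemma pbf_ssub (g : PBFGr) (a b : PBF) : sg g a - sg g b = sg g (a-b) :=
  (AddMonoidAlgebra.single_sub g a b).symm

lemma pbf_sadd (g : PBFGr) (a b : PBF) : sg g a + sg g b = sg g (a+b) :=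
  (AddMonoidAlgebra.single_add g a b).symm

lemma pbf_sneg (g : PBFGr) (a : PBF) : -(sg g a) = sg g (-a) :=
  (AddMonoidAlgebra.single_neg g a).symm

lemma pbf_two_mul (g : PBFGr) (a : PBF) :
    (2 : AddMonoidAlgebra PBF PBFGr) * sg g a = sg g (2*a) := by
  rw [show (2 : AddMonoidAlgebra PBF PBFGr) = sg 0 2 by
    rw [show (2 : AddMonoidAlgebra PBF PBFGr) = 1 + 1 by norm_num, AddMonoidAlgebra.one_def,
      pbf_sadd]; norm_num, pbf_sm, zero_add]

lemma pbf_four_mul (g : PBFGr) (a : PBF) :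
    (4 : AddMonoidAlgebra PBF PBFGr) * sg g a = sg g (4*a) := by
  rw [show (4 : AddMonoidAlgebra PBF PBFGr) = (2:AddMonoidAlgebra PBF PBFGr) + 2 by norm_num,
    add_mul, pbf_two_mul, pbf_sadd, ← add_mul]
  norm_num

lemma z2_11 : (1 + 1 : ZMod 2) = 0 := by decide

/-- The coaction of the group algebra realizing the grading. -/
def FF : PBFFree →ₐ[ℂ] AddMonoidAlgebra PBF PBFGr :=
  FreeAlgebra.lift ℂ fun i => sg (pbfDeg i) (pbfMk (FreeAlgebra.ι ℂ i))

lemma FF_bp : FF genBp = sg (1,0) (pbfMk genBp) := FreeAlgebra.lift_ι_apply _ _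
lemma FF_bm : FF genBm = sg (1,0) (pbfMk genBm) := FreeAlgebra.lift_ι_apply _ _
lemma FF_fp : FF genFp = sg (0,1) (pbfMk genFp) := FreeAlgebra.lift_ι_apply _ _
lemma FF_fm : FF genFm = sg (0,1) (pbfMk genFm) := FreeAlgebra.lift_ι_apply _ _

lemma FF_rel : ∀ ⦃x y : PBFFree⦄, PBFQRel x y → FF x = FF y := by
  intro x y r
  have h : pbfMk x = pbfMk y := RingQuot.mkAlgHom_rel ℂ r
  induction r <;>
  · simp only [pbComm, pbAcomm, map_mul, map_sub, map_add, map_neg, map_zero, map_ofNat] at h ⊢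
    simp only [FF_bp, FF_bm, FF_fp, FF_fm, pbf_sm, pbf_two_mul, pbf_four_mul, pbf_sadd,
      pbf_ssub, pbf_sneg, Prod.mk_add_mk, z2_11, zero_add, add_zero]
    rw [h]
    try simp

/-- The induced coaction on the quotient. -/
def pbfPhi : PBF →ₐ[ℂ] AddMonoidAlgebra PBF PBFGr :=
  RingQuot.liftAlgHom ℂ ⟨FF, FF_rel⟩

lemma pbfPhi_mk (a : PBFFree) : pbfPhi (pbfMk a) = FF a :=
  RingQuot.liftAlgHom_mkAlgHom_apply ℂ FF FF_rel a

/-- The homogeneous component of degree `g`. -/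
def pbfA (g : PBFGr) : Submodule ℂ PBF where
  carrier := {x | pbfPhi x = sg g x}
  add_mem' := by
    intro a b ha hb
    simp only [Set.mem_setOf_eq] at *
    rw [map_add, ha, hb, pbf_sadd]
  zero_mem' := by simp
  smul_mem' := by
    intro c x hx
    simp only [Set.mem_setOf_eq] at *
    rw [map_smul, hx, AddMonoidAlgebra.smul_single]

lemma pbfA_mem {g : PBFGr} {x : PBF} : x ∈ pbfA g ↔ pbfPhi x = sg g x := Iff.rfl

lemma pbfA_mul {g h : PBFGr} {a b : PBF} (ha : a ∈ pbfA g) (hb : b ∈ pbfA h) :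
    a * b ∈ pbfA (g + h) := by
  rw [pbfA_mem] at *
  rw [map_mul, ha, hb, pbf_sm]

lemma pbfA_one : (1 : PBF) ∈ pbfA 0 := by
  rw [pbfA_mem, map_one, AddMonoidAlgebra.one_def]

lemma pbfA_algebraMap (r : ℂ) : algebraMap ℂ PBF r ∈ pbfA 0 := by
  rw [pbfA_mem, AlgHom.commutes]
  rfl

lemma pbfA_gen (i : Fin 4) : pbfMk (FreeAlgebra.ι ℂ i) ∈ pbfA (pbfDeg i) := by
  rw [pbfA_mem, pbfPhi_mk]
  exact FreeAlgebra.lift_ι_apply _ _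

/-- Projection onto the degree-`g` component. -/
def pbfP (g : PBFGr) : PBF →ₗ[ℂ] PBF :=
  (Finsupp.lapply g).comp ((AddMonoidAlgebra.coeffLinearEquiv ℂ).toLinearMap.comp pbfPhi.toLinearMap)

lemma pbfP_of_mem {g h : PBFGr} {x : PBF} (hx : x ∈ pbfA h) :
    pbfP g x = if h = g then x else 0 := by
  rw [pbfA_mem] at hx
  have h0 : pbfP g x = (pbfPhi x).coeff g := rfl
  rw [h0, hx, AddMonoidAlgebra.coeff_single, Finsupp.single_apply]

lemma pbfA_indep : iSupIndep pbfA := by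
  intro g
  rw [Submodule.disjoint_def]
  intro x hxg hxs
  have h1 : pbfP g x = x := by rw [pbfP_of_mem hxg, if_pos rfl]
  have h2 : (⨆ h, ⨆ _ : h ≠ g, pbfA h) ≤ LinearMap.ker (pbfP g) := by
    refine iSup_le fun h => iSup_le fun hh => ?_
    intro y hy
    rw [LinearMap.mem_ker, pbfP_of_mem hy, if_neg hh]
  have := h2 hxs
  rw [LinearMap.mem_ker] at this
  rw [← h1, this]

lemma pbfA_mul_mem_iSup {x y : PBF} (hx : x ∈ ⨆ g, pbfA g) (hy : y ∈ ⨆ g, pbfA g) :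
    x * y ∈ ⨆ g, pbfA g := by
  refine Submodule.iSup_induction (motive := fun x => x * y ∈ ⨆ g, pbfA g) pbfA hx ?_ (by simp) ?_
  · intro g a ha
    refine Submodule.iSup_induction (motive := fun y => a * y ∈ ⨆ g, pbfA g) pbfA hy ?_ (by simp) ?_
    · intro h b hb
      exact le_iSup pbfA (g + h) (pbfA_mul ha hb)
    · intro u v hu hv
      rw [mul_add]; exact add_mem hu hv
  · intro u v hu hv
    rw [add_mul]; exact add_mem hu hv

lemma pbfA_iSup_top : (⨆ g, pbfA g) = ⊤ := by
  rw [eq_top_iff]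
  intro z hz
  obtain ⟨a, rfl⟩ := RingQuot.mkAlgHom_surjective ℂ PBFQRel z
  clear hz
  induction a using FreeAlgebra.induction with
  | grade0 r =>
      exact le_iSup pbfA 0 (by
        rw [show (RingQuot.mkAlgHom ℂ PBFQRel) (algebraMap ℂ _ r) = algebraMap ℂ PBF r from
          AlgHom.commutes _ r]
        exact pbfA_algebraMap r)
  | grade1 i => exact le_iSup pbfA (pbfDeg i) (pbfA_gen i)
  | mul a b ha hb => rw [map_mul]; exact pbfA_mul_mem_iSup ha hb
  | add a b ha hb => rw [map_add]; exact add_mem ha hb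

theorem pbf_grading_bf :
    ∃ 𝒜 : ZMod 2 × ZMod 2 → Submodule ℂ PBF,
      (∀ g h : ZMod 2 × ZMod 2, ∀ a ∈ 𝒜 g, ∀ b ∈ 𝒜 h, a * b ∈ 𝒜 (g + h)) ∧
      (1 : PBF) ∈ 𝒜 (0, 0) ∧
      DirectSum.IsInternal 𝒜 ∧
      pbfMk genBp ∈ 𝒜 (1, 0) ∧ pbfMk genBm ∈ 𝒜 (1, 0) ∧
      pbfMk genFp ∈ 𝒜 (0, 1) ∧ pbfMk genFm ∈ 𝒜 (0, 1) := by
  refine ⟨pbfA, fun g h a ha b hb => pbfA_mul ha hb, pbfA_one,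
    DirectSum.isInternal_submodule_of_iSupIndep_of_iSup_eq_top pbfA_indep pbfA_iSup_top,
    pbfA_gen 0, pbfA_gen 1, pbfA_gen 2, pbfA_gen 3⟩
end
end

section
/- Let P_BF^(1,1) be the quotient of the free unital associative ℂ-algebra on the four generators b⁺, b⁻, f⁺, f⁻ by the two-sided ideal generated by the defining trilinear relations. Then there exists a (ℤ₂ × ℤ₂)-grading of P_BF^(1,1) as a ℂ-algebra, i.e. a family of ℂ-submodules (A_g)_{g ∈ ℤ₂×ℤ₂} with A_g · A_h ⊆ A_{g+h}, 1 ∈ A_{(0,0)}, and P_BF^(1,1) the internal direct sum of the A_g, such that the images of b⁺ and b⁻ lie in A_{(1,0)} and the images of f⁺ and f⁻ lie in A_{(1,1)}. -/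
noncomputable section

-- sign lemmas
theorem pbComm_neg_left {A : Type*} [Ring A] (x y : A) : pbComm (-x) y = -pbComm x y := by
  simp only [pbComm, neg_mul, mul_neg]; abel
theorem pbComm_neg_right {A : Type*} [Ring A] (x y : A) : pbComm x (-y) = -pbComm x y := by
  simp only [pbComm, neg_mul, mul_neg]; abel
theorem pbAcomm_neg_left {A : Type*} [Ring A] (x y : A) : pbAcomm (-x) y = -pbAcomm x y := by
  simp only [pbAcomm, neg_mul, mul_neg]; abel
theorem pbAcomm_neg_right {A : Type*} [Ring A] (x y : A) : pbAcomm x (-y) = -pbAcomm x y := by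
  simp only [pbAcomm, neg_mul, mul_neg]; abel

def nuS : PBFFree →ₐ[ℂ] PBFFree := FreeAlgebra.lift ℂ (fun i => -(FreeAlgebra.ι ℂ i))
def nuT : PBFFree →ₐ[ℂ] PBFFree :=
  FreeAlgebra.lift ℂ (fun i => if (i : ℕ) < 2 then FreeAlgebra.ι ℂ i else -(FreeAlgebra.ι ℂ i))

@[simp] theorem nuS_pbComm (x y : PBFFree) : nuS (pbComm x y) = pbComm (nuS x) (nuS y) := by
  simp [pbComm]
@[simp] theorem nuS_pbAcomm (x y : PBFFree) : nuS (pbAcomm x y) = pbAcomm (nuS x) (nuS y) := by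
  simp [pbAcomm]
@[simp] theorem nuT_pbComm (x y : PBFFree) : nuT (pbComm x y) = pbComm (nuT x) (nuT y) := by
  simp [pbComm]
@[simp] theorem nuT_pbAcomm (x y : PBFFree) : nuT (pbAcomm x y) = pbAcomm (nuT x) (nuT y) := by
  simp [pbAcomm]

@[simp] theorem nuS_genBp : nuS genBp = -genBp := by simp [nuS, genBp]
@[simp] theorem nuS_genBm : nuS genBm = -genBm := by simp [nuS, genBm]
@[simp] theorem nuS_genFp : nuS genFp = -genFp := by simp [nuS, genFp]
@[simp] theorem nuS_genFm : nuS genFm = -genFm := by simp [nuS, genFm]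
@[simp] theorem nuT_genBp : nuT genBp = genBp := by simp [nuT, genBp, show ((0:Fin 4):ℕ) < 2 by decide]
@[simp] theorem nuT_genBm : nuT genBm = genBm := by simp [nuT, genBm, show ((1:Fin 4):ℕ) < 2 by decide]
@[simp] theorem nuT_genFp : nuT genFp = -genFp := by simp [nuT, genFp, show ¬((2:Fin 4):ℕ) < 2 by decide]
@[simp] theorem nuT_genFm : nuT genFm = -genFm := by simp [nuT, genFm, show ¬((3:Fin 4):ℕ) < 2 by decide]


theorem pbf_neg_one_smul (x : PBF) : (-1 : ℂ) • x = -x := neg_one_smul ℂ x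

theorem pbf_mul_neg (x y : PBF) : x * -y = -(x * y) := mul_neg x y
theorem pbf_neg_mul (x y : PBF) : -x * y = -(x * y) := neg_mul x y
theorem pbf_neg_neg (x : PBF) : - -x = x := neg_neg x
theorem pbf_neg_inj {x y : PBF} : -x = -y ↔ x = y := neg_inj
theorem pbf_neg_eq_zero {x : PBF} : -x = 0 ↔ x = 0 := neg_eq_zero
theorem pbf_neg_eq_iff {x y : PBF} : -x = y ↔ x = -y := neg_eq_iff_eq_neg

attribute [local simp] map_mul map_ofNat mul_neg neg_neg neg_eq_iff_eq_neg pbComm_neg_left pbComm_neg_right pbAcomm_neg_left pbAcomm_neg_right pbf_mul_neg pbf_neg_mul pbf_neg_neg pbf_neg_inj pbf_neg_eq_zero pbf_neg_eq_iff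


set_option maxHeartbeats 1000000 in
theorem compatS : ∀ ⦃x y : PBFFree⦄, PBFQRel x y →
    ((RingQuot.mkAlgHom ℂ PBFQRel).comp nuS) x = ((RingQuot.mkAlgHom ℂ PBFQRel).comp nuS) y := by
  intro x y h
  cases h
  case r01 => simpa using RingQuot.mkAlgHom_rel ℂ PBFQRel.r01
  case r02 => simpa using RingQuot.mkAlgHom_rel ℂ PBFQRel.r02
  case r03 => simpa using RingQuot.mkAlgHom_rel ℂ PBFQRel.r03
  case r04 => simpa using RingQuot.mkAlgHom_rel ℂ PBFQRel.r04
  case r05 => simpa using RingQuot.mkAlgHom_rel ℂ PBFQRel.r05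
  case r06 => simpa using RingQuot.mkAlgHom_rel ℂ PBFQRel.r06
  case r07 => simpa using RingQuot.mkAlgHom_rel ℂ PBFQRel.r07
  case r08 => simpa using RingQuot.mkAlgHom_rel ℂ PBFQRel.r08
  case r09 => simpa using RingQuot.mkAlgHom_rel ℂ PBFQRel.r09
  case r10 => simpa using RingQuot.mkAlgHom_rel ℂ PBFQRel.r10
  case r11 => simpa using RingQuot.mkAlgHom_rel ℂ PBFQRel.r11
  case r12 => simpa using RingQuot.mkAlgHom_rel ℂ PBFQRel.r12
  case r13 => simpa using RingQuot.mkAlgHom_rel ℂ PBFQRel.r13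
  case r14 => simpa using RingQuot.mkAlgHom_rel ℂ PBFQRel.r14
  case r15 => simpa using RingQuot.mkAlgHom_rel ℂ PBFQRel.r15
  case r16 => simpa using RingQuot.mkAlgHom_rel ℂ PBFQRel.r16
  case r17 => simpa using RingQuot.mkAlgHom_rel ℂ PBFQRel.r17
  case r18 => simpa using RingQuot.mkAlgHom_rel ℂ PBFQRel.r18
  case r19 => simpa using RingQuot.mkAlgHom_rel ℂ PBFQRel.r19
  case r20 => simpa using RingQuot.mkAlgHom_rel ℂ PBFQRel.r20
  case r21 => simpa using RingQuot.mkAlgHom_rel ℂ PBFQRel.r21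
  case r22 => simpa using RingQuot.mkAlgHom_rel ℂ PBFQRel.r22
  case r23 => simpa using RingQuot.mkAlgHom_rel ℂ PBFQRel.r23
  case r24 => simpa using RingQuot.mkAlgHom_rel ℂ PBFQRel.r24
  case r25 => simpa using RingQuot.mkAlgHom_rel ℂ PBFQRel.r25
  case r26 => simpa using RingQuot.mkAlgHom_rel ℂ PBFQRel.r26
  case r27 => simpa using RingQuot.mkAlgHom_rel ℂ PBFQRel.r27
  case r28 => simpa using RingQuot.mkAlgHom_rel ℂ PBFQRel.r28
  case r29 => simpa using RingQuot.mkAlgHom_rel ℂ PBFQRel.r29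
  case r30 => simpa using RingQuot.mkAlgHom_rel ℂ PBFQRel.r30
  case r31 => simpa using RingQuot.mkAlgHom_rel ℂ PBFQRel.r31
  case r32 => simpa using RingQuot.mkAlgHom_rel ℂ PBFQRel.r32

set_option maxHeartbeats 1000000 in
theorem compatT : ∀ ⦃x y : PBFFree⦄, PBFQRel x y →
    ((RingQuot.mkAlgHom ℂ PBFQRel).comp nuT) x = ((RingQuot.mkAlgHom ℂ PBFQRel).comp nuT) y := by
  intro x y h
  cases h
  case r01 => simpa using RingQuot.mkAlgHom_rel ℂ PBFQRel.r01
  case r02 => simpa using RingQuot.mkAlgHom_rel ℂ PBFQRel.r02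
  case r03 => simpa using RingQuot.mkAlgHom_rel ℂ PBFQRel.r03
  case r04 => simpa using RingQuot.mkAlgHom_rel ℂ PBFQRel.r04
  case r05 => simpa using RingQuot.mkAlgHom_rel ℂ PBFQRel.r05
  case r06 => simpa using RingQuot.mkAlgHom_rel ℂ PBFQRel.r06
  case r07 => simpa using RingQuot.mkAlgHom_rel ℂ PBFQRel.r07
  case r08 => simpa using RingQuot.mkAlgHom_rel ℂ PBFQRel.r08
  case r09 => simpa using RingQuot.mkAlgHom_rel ℂ PBFQRel.r09
  case r10 => simpa using RingQuot.mkAlgHom_rel ℂ PBFQRel.r10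
  case r11 => simpa using RingQuot.mkAlgHom_rel ℂ PBFQRel.r11
  case r12 => simpa using RingQuot.mkAlgHom_rel ℂ PBFQRel.r12
  case r13 => simpa using RingQuot.mkAlgHom_rel ℂ PBFQRel.r13
  case r14 => simpa using RingQuot.mkAlgHom_rel ℂ PBFQRel.r14
  case r15 => simpa using RingQuot.mkAlgHom_rel ℂ PBFQRel.r15
  case r16 => simpa using RingQuot.mkAlgHom_rel ℂ PBFQRel.r16
  case r17 => simpa using RingQuot.mkAlgHom_rel ℂ PBFQRel.r17
  case r18 => simpa using RingQuot.mkAlgHom_rel ℂ PBFQRel.r18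
  case r19 => simpa using RingQuot.mkAlgHom_rel ℂ PBFQRel.r19
  case r20 => simpa using RingQuot.mkAlgHom_rel ℂ PBFQRel.r20
  case r21 => simpa using RingQuot.mkAlgHom_rel ℂ PBFQRel.r21
  case r22 => simpa using RingQuot.mkAlgHom_rel ℂ PBFQRel.r22
  case r23 => simpa using RingQuot.mkAlgHom_rel ℂ PBFQRel.r23
  case r24 => simpa using RingQuot.mkAlgHom_rel ℂ PBFQRel.r24
  case r25 => simpa using RingQuot.mkAlgHom_rel ℂ PBFQRel.r25
  case r26 => simpa using RingQuot.mkAlgHom_rel ℂ PBFQRel.r26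
  case r27 => simpa using RingQuot.mkAlgHom_rel ℂ PBFQRel.r27
  case r28 => simpa using RingQuot.mkAlgHom_rel ℂ PBFQRel.r28
  case r29 => simpa using RingQuot.mkAlgHom_rel ℂ PBFQRel.r29
  case r30 => simpa using RingQuot.mkAlgHom_rel ℂ PBFQRel.r30
  case r31 => simpa using RingQuot.mkAlgHom_rel ℂ PBFQRel.r31
  case r32 => simpa using RingQuot.mkAlgHom_rel ℂ PBFQRel.r32

def pbfS : PBF →ₐ[ℂ] PBF := RingQuot.liftAlgHom ℂ ⟨(RingQuot.mkAlgHom ℂ PBFQRel).comp nuS, compatS⟩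
def pbfT : PBF →ₐ[ℂ] PBF := RingQuot.liftAlgHom ℂ ⟨(RingQuot.mkAlgHom ℂ PBFQRel).comp nuT, compatT⟩

theorem pbfS_mk (x : PBFFree) :
    pbfS (RingQuot.mkAlgHom ℂ PBFQRel x) = RingQuot.mkAlgHom ℂ PBFQRel (nuS x) :=
  RingQuot.liftAlgHom_mkAlgHom_apply ℂ _ compatS x
theorem pbfT_mk (x : PBFFree) :
    pbfT (RingQuot.mkAlgHom ℂ PBFQRel x) = RingQuot.mkAlgHom ℂ PBFQRel (nuT x) :=
  RingQuot.liftAlgHom_mkAlgHom_apply ℂ _ compatT x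

theorem pbfS_pbfS (x : PBF) : pbfS (pbfS x) = x := by
  have h : pbfS.comp pbfS = AlgHom.id ℂ PBF := by
    apply RingQuot.ringQuot_ext'
    apply FreeAlgebra.hom_ext
    funext i
    fin_cases i <;>
      simp [AlgHom.comp_apply, pbfS_mk, map_neg,
        show FreeAlgebra.ι ℂ (0 : Fin 4) = genBp from rfl,
        show FreeAlgebra.ι ℂ (1 : Fin 4) = genBm from rfl,
        show FreeAlgebra.ι ℂ (2 : Fin 4) = genFp from rfl,
        show FreeAlgebra.ι ℂ (3 : Fin 4) = genFm from rfl]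
  exact DFunLike.congr_fun h x

theorem pbfT_pbfT (x : PBF) : pbfT (pbfT x) = x := by
  have h : pbfT.comp pbfT = AlgHom.id ℂ PBF := by
    apply RingQuot.ringQuot_ext'
    apply FreeAlgebra.hom_ext
    funext i
    fin_cases i <;>
      simp [AlgHom.comp_apply, pbfT_mk, map_neg,
        show FreeAlgebra.ι ℂ (0 : Fin 4) = genBp from rfl,
        show FreeAlgebra.ι ℂ (1 : Fin 4) = genBm from rfl,
        show FreeAlgebra.ι ℂ (2 : Fin 4) = genFp from rfl,
        show FreeAlgebra.ι ℂ (3 : Fin 4) = genFm from rfl]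
  exact DFunLike.congr_fun h x

theorem pbfT_pbfS (x : PBF) : pbfT (pbfS x) = pbfS (pbfT x) := by
  have h : pbfT.comp pbfS = pbfS.comp pbfT := by
    apply RingQuot.ringQuot_ext'
    apply FreeAlgebra.hom_ext
    funext i
    fin_cases i <;>
      simp [AlgHom.comp_apply, pbfT_mk, pbfS_mk, map_neg,
        show FreeAlgebra.ι ℂ (0 : Fin 4) = genBp from rfl,
        show FreeAlgebra.ι ℂ (1 : Fin 4) = genBm from rfl,
        show FreeAlgebra.ι ℂ (2 : Fin 4) = genFp from rfl,
        show FreeAlgebra.ι ℂ (3 : Fin 4) = genFm from rfl]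
  exact DFunLike.congr_fun h x

def sgn (a : ZMod 2) : ℂ := if a = 0 then 1 else -1

theorem zmod2_em : ∀ a : ZMod 2, a = 0 ∨ a = 1 := by decide

theorem sgn_zero : sgn 0 = 1 := by simp [sgn]
theorem sgn_one : sgn 1 = -1 := by simp [sgn]
theorem sgn_mul_self (a : ZMod 2) : sgn a * sgn a = 1 := by
  rcases zmod2_em a with rfl | rfl <;> norm_num [sgn]
theorem sgn_add (a b : ZMod 2) : sgn (a + b) = sgn a * sgn b := by
  rcases zmod2_em a with rfl | rfl <;> rcases zmod2_em b with rfl | rfl <;>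
    simp only [show ((1 : ZMod 2) + 1) = 0 from rfl, zero_add, add_zero] <;>
    norm_num [sgn, show (1 : ZMod 2) ≠ 0 by decide]

def piece (g : ZMod 2 × ZMod 2) : Submodule ℂ PBF where
  carrier := {x | pbfS x = sgn g.1 • x ∧ pbfT x = sgn g.2 • x}
  add_mem' := by
    rintro a b ⟨ha1, ha2⟩ ⟨hb1, hb2⟩
    constructor <;> simp only [map_add, ha1, ha2, hb1, hb2, smul_add]
  zero_mem' := by simp
  smul_mem' := by
    rintro c x ⟨h1, h2⟩
    constructor <;> simp only [map_smul, h1, h2, smul_comm c]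

theorem mem_piece_iff {g : ZMod 2 × ZMod 2} {x : PBF} :
    x ∈ piece g ↔ pbfS x = sgn g.1 • x ∧ pbfT x = sgn g.2 • x := Iff.rfl

def proj (g : ZMod 2 × ZMod 2) (x : PBF) : PBF :=
  (4 : ℂ)⁻¹ • (x + sgn g.1 • pbfS x + sgn g.2 • pbfT x + (sgn g.1 * sgn g.2) • pbfS (pbfT x))

theorem proj_mem (g : ZMod 2 × ZMod 2) (x : PBF) : proj g x ∈ piece g := by
  rw [mem_piece_iff]
  constructor
  · simp only [proj, map_smul, map_add, pbfS_pbfS]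
    rcases g with ⟨a, b⟩
    rcases zmod2_em a with rfl | rfl <;> rcases zmod2_em b with rfl | rfl <;>
      simp [sgn] <;> module
  · simp only [proj, map_smul, map_add, pbfT_pbfT, ← pbfT_pbfS]
    rcases g with ⟨a, b⟩
    rcases zmod2_em a with rfl | rfl <;> rcases zmod2_em b with rfl | rfl <;>
      simp [sgn] <;> module

theorem sum_proj (x : PBF) :
    proj (0, 0) x + proj (0, 1) x + proj (1, 0) x + proj (1, 1) x = x := by
  simp only [proj, sgn, Prod.fst, Prod.snd]
  norm_num
  module

theorem proj_of_mem {g : ZMod 2 × ZMod 2} {x : PBF} (hx : x ∈ piece g)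
    (h : ZMod 2 × ZMod 2) : proj h x = if h = g then x else 0 := by
  obtain ⟨h1, h2⟩ := hx
  simp only [proj, h2, map_smul, h1, smul_smul]
  rcases g with ⟨a, b⟩; rcases h with ⟨c, d⟩
  rcases zmod2_em a with rfl | rfl <;> rcases zmod2_em b with rfl | rfl <;>
    rcases zmod2_em c with rfl | rfl <;> rcases zmod2_em d with rfl | rfl <;>
    simp [sgn, Prod.ext_iff, show (0 : ZMod 2) ≠ 1 by decide, show (1 : ZMod 2) ≠ 0 by decide] <;>
    module

theorem proj_add (g : ZMod 2 × ZMod 2) (x y : PBF) :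
    proj g (x + y) = proj g x + proj g y := by
  simp only [proj, map_add, smul_add]; module

theorem proj_zero (g : ZMod 2 × ZMod 2) : proj g 0 = 0 := by simp [proj]

open scoped DirectSum in
theorem piece_mul {g h : ZMod 2 × ZMod 2} {a b : PBF}
    (ha : a ∈ piece g) (hb : b ∈ piece h) : a * b ∈ piece (g + h) := by
  rw [mem_piece_iff] at ha hb ⊢
  obtain ⟨ha1, ha2⟩ := ha; obtain ⟨hb1, hb2⟩ := hb
  constructor
  · rw [map_mul, ha1, hb1, smul_mul_smul_comm, ← sgn_add]; rfl
  · rw [map_mul, ha2, hb2, smul_mul_smul_comm, ← sgn_add]; rfl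

theorem piece_one : (1 : PBF) ∈ piece (0, 0) := by
  rw [mem_piece_iff]; simp [sgn]

open scoped DirectSum

instance pbfDSAddCommMonoid : AddCommMonoid (⨁ g, (piece g : Submodule ℂ PBF)) :=
  inferInstance
instance pbfDSAddMonoid : AddMonoid (⨁ g, (piece g : Submodule ℂ PBF)) :=
  pbfDSAddCommMonoid.toAddMonoid
instance pbfDSAddZeroClass : AddZeroClass (⨁ g, (piece g : Submodule ℂ PBF)) :=
  pbfDSAddMonoid.toAddZeroClass
instance pbfDSAdd : Add (⨁ g, (piece g : Submodule ℂ PBF)) :=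
  pbfDSAddZeroClass.toAdd
instance pbfDSZero : Zero (⨁ g, (piece g : Submodule ℂ PBF)) :=
  pbfDSAddZeroClass.toZero
set_option maxHeartbeats 2000000 in
set_option synthInstance.maxHeartbeats 400000 in
open scoped DirectSum in
theorem proj_coe (h : ZMod 2 × ZMod 2) (w : ⨁ g, (piece g : Submodule ℂ PBF)) :
    proj h (DirectSum.coeAddMonoidHom piece w) = (w h : PBF) := by
  induction w using DirectSum.induction_on with
  | zero =>
      rw [(DirectSum.coeAddMonoidHom piece).map_zero, proj_zero]
      rw [DirectSum.zero_apply, ZeroMemClass.coe_zero]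
  | of g y =>
      rw [DirectSum.coeAddMonoidHom_of, proj_of_mem y.2]
      by_cases hq : h = g
      · subst hq; rw [DirectSum.of_eq_same]; simp
      · rw [DirectSum.of_eq_of_ne _ _ _ hq]; simp [hq]
  | add x y hx hy =>
      rw [(DirectSum.coeAddMonoidHom piece).map_add, proj_add, hx, hy,
        DirectSum.add_apply, Submodule.coe_add]

set_option maxHeartbeats 2000000 in
set_option synthInstance.maxHeartbeats 400000 in
theorem piece_internal : DirectSum.IsInternal piece := by
  constructor
  · intro v w hvw
    refine DFinsupp.ext fun g => Subtype.ext ?_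
    rw [← proj_coe g v, ← proj_coe g w, hvw]
  · intro x
    refine ⟨DirectSum.of _ (0, 0) ⟨proj (0, 0) x, proj_mem _ _⟩ +
        DirectSum.of _ (0, 1) ⟨proj (0, 1) x, proj_mem _ _⟩ +
        DirectSum.of _ (1, 0) ⟨proj (1, 0) x, proj_mem _ _⟩ +
        DirectSum.of _ (1, 1) ⟨proj (1, 1) x, proj_mem _ _⟩, ?_⟩
    rw [(DirectSum.coeAddMonoidHom piece).map_add, (DirectSum.coeAddMonoidHom piece).map_add,
      (DirectSum.coeAddMonoidHom piece).map_add, DirectSum.coeAddMonoidHom_of,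
      DirectSum.coeAddMonoidHom_of, DirectSum.coeAddMonoidHom_of, DirectSum.coeAddMonoidHom_of]
    exact sum_proj x

theorem gen_mem_bp : RingQuot.mkAlgHom ℂ PBFQRel genBp ∈ piece (1, 0) := by
  rw [mem_piece_iff]
  constructor
  · rw [pbfS_mk, nuS_genBp, map_neg]; simp [sgn, show (1 : ZMod 2) ≠ 0 by decide, pbf_neg_one_smul]
  · rw [pbfT_mk, nuT_genBp]; simp [sgn]

theorem gen_mem_bm : RingQuot.mkAlgHom ℂ PBFQRel genBm ∈ piece (1, 0) := by
  rw [mem_piece_iff]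
  constructor
  · rw [pbfS_mk, nuS_genBm, map_neg]; simp [sgn, show (1 : ZMod 2) ≠ 0 by decide, pbf_neg_one_smul]
  · rw [pbfT_mk, nuT_genBm]; simp [sgn]

theorem gen_mem_fp : RingQuot.mkAlgHom ℂ PBFQRel genFp ∈ piece (1, 1) := by
  rw [mem_piece_iff]
  constructor
  · rw [pbfS_mk, nuS_genFp, map_neg]; simp [sgn, show (1 : ZMod 2) ≠ 0 by decide, pbf_neg_one_smul]
  · rw [pbfT_mk, nuT_genFp, map_neg]; simp [sgn, show (1 : ZMod 2) ≠ 0 by decide, pbf_neg_one_smul]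

theorem gen_mem_fm : RingQuot.mkAlgHom ℂ PBFQRel genFm ∈ piece (1, 1) := by
  rw [mem_piece_iff]
  constructor
  · rw [pbfS_mk, nuS_genFm, map_neg]; simp [sgn, show (1 : ZMod 2) ≠ 0 by decide, pbf_neg_one_smul]
  · rw [pbfT_mk, nuT_genFm, map_neg]; simp [sgn, show (1 : ZMod 2) ≠ 0 by decide, pbf_neg_one_smul]


theorem pbf_grading_color :
    ∃ 𝒜 : ZMod 2 × ZMod 2 → Submodule ℂ PBF,
      (∀ g h : ZMod 2 × ZMod 2, ∀ a ∈ 𝒜 g, ∀ b ∈ 𝒜 h, a * b ∈ 𝒜 (g + h)) ∧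
      (1 : PBF) ∈ 𝒜 (0, 0) ∧
      DirectSum.IsInternal 𝒜 ∧
      pbfMk genBp ∈ 𝒜 (1, 0) ∧ pbfMk genBm ∈ 𝒜 (1, 0) ∧
      pbfMk genFp ∈ 𝒜 (1, 1) ∧ pbfMk genFm ∈ 𝒜 (1, 1) :=
  ⟨piece, fun _ _ _ ha _ hb => piece_mul ha hb, piece_one, piece_internal,
    gen_mem_bp, gen_mem_bm, gen_mem_fp, gen_mem_fm⟩
end
end
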